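/- arXiv:1310.4543 — 4 statements merged into one kernel-verified Lean document; each statement's English description precedes it below -/
import Mathlib

section
/- Let μ : ℝ → 𝔤* be a differentiable curve satisfying the energy-dissipative Lie–Poisson equation d/dt μ(t) + ad*_{δh/δμ} μ(t) = − θ ad*_{δC/δμ} ([δC/δμ, δh/δμ])^♭ (functional derivatives and ♭ evaluated at μ(t)), where C is a Casimir, i.e. ad*_{δC/δμ} μ = 0 for every μ ∈ 𝔤*. Then the Casimir is exactly preserved: the function t ↦ C(μ(t)) is constant on ℝ. -/
/-!
Along the flow, `d/dt C(μ t) = ⟨μ' t, δC/δμ⟩`. Pairing the equation with `η = δC/δμ` kills the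
dissipative term, since it is evaluated at `[δC/δμ, δC/δμ] = 0`, and kills the Lie–Poisson term,
since `⟨μ, [δh/δμ, δC/δμ]⟩ = -⟨ad*_{δC/δμ} μ, δh/δμ⟩ = 0` for a Casimir. Hence `C ∘ μ` has zero
derivative everywhere and is constant.
-/

section LieRing

variable {G : Type*} [LieRing G]

theorem apply_lie_swap_eq_zero (f : G → ℝ) {ξ : G} (hf : ∀ η, f ⁅ξ, η⁆ = 0) (η : G) :
    f ⁅η, ξ⁆ = 0 := by
  simpa only [lie_neg, lie_skew] using hf (-η)

theorem apply_eq_zero_of_dissipative_lie_poisson (ν ν' b : G → ℝ) {ξ ζ : G} (θ : ℝ)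
    (hν : ∀ η, ν ⁅ξ, η⁆ = 0) (hν' : ν' 0 = 0)
    (heq : ∀ η, ν' η + ν ⁅ζ, η⁆ = -(θ * b ⁅ξ, η⁆)) :
    ν' ξ = 0 := by
  -- `b` is an arbitrary function, so its value at `⁅ξ, ξ⁆ = 0` is read off the equation at `η = 0`.
  have hdissipative : θ * b ⁅ξ, ξ⁆ = 0 := by
    have hν_zero : ν 0 = 0 := by simpa only [lie_zero] using hν 0
    have h0 := heq 0
    rw [hν', lie_zero, hν_zero, lie_zero, ← lie_self ξ] at h0
    linarith
  have hξ := heq ξ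
  rw [apply_lie_swap_eq_zero ν hν, hdissipative] at hξ
  linarith

end LieRing

theorem statement4_general
    {G : Type*} [NormedAddCommGroup G] [NormedSpace ℝ G]
    [LieRing G]
    (θ : ℝ)
    (γ : (@ContinuousLinearMap ℝ ℝ _ _ (RingHom.id ℝ) G _ NormedAddCommGroup.toAddCommGroup.toAddCommMonoid ℝ _ _ NormedSpace.toModule _) → @LinearMap ℝ ℝ _ _ (RingHom.id ℝ) G (@LinearMap ℝ ℝ _ _ (RingHom.id ℝ) G ℝ NormedAddCommGroup.toAddCommGroup.toAddCommMonoid _ NormedSpace.toModule _) NormedAddCommGroup.toAddCommGroup.toAddCommMonoid _ NormedSpace.toModule _)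
    (C : (@ContinuousLinearMap ℝ ℝ _ _ (RingHom.id ℝ) G _ NormedAddCommGroup.toAddCommGroup.toAddCommMonoid ℝ _ _ NormedSpace.toModule _) → ℝ) (dh dC : (@ContinuousLinearMap ℝ ℝ _ _ (RingHom.id ℝ) G _ NormedAddCommGroup.toAddCommGroup.toAddCommMonoid ℝ _ _ NormedSpace.toModule _) → G)
    (hdC : ∀ μ : @ContinuousLinearMap ℝ ℝ _ _ (RingHom.id ℝ) G _ NormedAddCommGroup.toAddCommGroup.toAddCommMonoid ℝ _ _ NormedSpace.toModule _, HasFDerivAt C (ContinuousLinearMap.apply ℝ ℝ (dC μ)) μ)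
    (hCasimir : ∀ (ν : @ContinuousLinearMap ℝ ℝ _ _ (RingHom.id ℝ) G _ NormedAddCommGroup.toAddCommGroup.toAddCommMonoid ℝ _ _ NormedSpace.toModule _) (η : G), ν ⁅dC ν, η⁆ = 0)
    (μ : ℝ → @ContinuousLinearMap ℝ ℝ _ _ (RingHom.id ℝ) G _ NormedAddCommGroup.toAddCommGroup.toAddCommMonoid ℝ _ _ NormedSpace.toModule _) (μ' : ℝ → @ContinuousLinearMap ℝ ℝ _ _ (RingHom.id ℝ) G _ NormedAddCommGroup.toAddCommGroup.toAddCommMonoid ℝ _ _ NormedSpace.toModule _)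
    (hμ : ∀ t : ℝ, HasDerivAt μ (μ' t) t)
    (heq : ∀ (t : ℝ) (η : G),
      μ' t η + μ t ⁅dh (μ t), η⁆ =
        -(θ * γ (μ t) ⁅dC (μ t), dh (μ t)⁆ ⁅dC (μ t), η⁆)) :
    ∀ s t : ℝ, C (μ s) = C (μ t) := by
  have hderiv : ∀ t, HasDerivAt (fun t => C (μ t)) 0 t := by
    intro t
    -- The zero of the Lie ring need not be that of the normed group, so `map_zero` does not
    -- apply; the Casimir identity at `η = δC/δμ` gives it instead.
    have hμ'_zero : μ' t 0 = 0 := by simpa only [lie_self] using hCasimir (μ' t) (dC (μ' t))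
    have hpairing : μ' t (dC (μ t)) = 0 :=
      apply_eq_zero_of_dissipative_lie_poisson _ _ _ θ (hCasimir (μ t)) hμ'_zero (heq t)
    have hcomp := (hdC (μ t)).comp_hasDerivAt t (hμ t)
    rw [ContinuousLinearMap.apply_apply, hpairing] at hcomp
    exact hcomp
  exact is_const_of_deriv_eq_zero (fun t => (hderiv t).differentiableAt)
    (fun t => (hderiv t).deriv)

/-- For a curve `μ` solving the energy-dissipative Lie–Poisson equation
`dμ/dt + ad*_{δh/δμ} μ = − θ ad*_{δC/δμ} ([δC/δμ, δh/δμ])^♭`, where `C` is a Casimir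
(`ad*_{δC/δμ} μ = 0` for every `μ`), the Casimir is exactly preserved:
`t ↦ C(μ(t))` is constant on `ℝ`. -/
theorem statement4
    {G : Type*} [NormedAddCommGroup G] [NormedSpace ℝ G]
    [LieRing G] [LieAlgebra ℝ G] [FiniteDimensional ℝ G]
    (θ : ℝ)
    (γ : (@ContinuousLinearMap ℝ ℝ _ _ (RingHom.id ℝ) G _ NormedAddCommGroup.toAddCommGroup.toAddCommMonoid ℝ _ _ NormedSpace.toModule _) → @LinearMap ℝ ℝ _ _ (RingHom.id ℝ) G (@LinearMap ℝ ℝ _ _ (RingHom.id ℝ) G ℝ NormedAddCommGroup.toAddCommGroup.toAddCommMonoid _ NormedSpace.toModule _) NormedAddCommGroup.toAddCommGroup.toAddCommMonoid _ NormedSpace.toModule _)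
    (h C : (@ContinuousLinearMap ℝ ℝ _ _ (RingHom.id ℝ) G _ NormedAddCommGroup.toAddCommGroup.toAddCommMonoid ℝ _ _ NormedSpace.toModule _) → ℝ) (dh dC : (@ContinuousLinearMap ℝ ℝ _ _ (RingHom.id ℝ) G _ NormedAddCommGroup.toAddCommGroup.toAddCommMonoid ℝ _ _ NormedSpace.toModule _) → G)
    (hdh : ∀ μ : @ContinuousLinearMap ℝ ℝ _ _ (RingHom.id ℝ) G _ NormedAddCommGroup.toAddCommGroup.toAddCommMonoid ℝ _ _ NormedSpace.toModule _, HasFDerivAt h (ContinuousLinearMap.apply ℝ ℝ (dh μ)) μ)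
    (hdC : ∀ μ : @ContinuousLinearMap ℝ ℝ _ _ (RingHom.id ℝ) G _ NormedAddCommGroup.toAddCommGroup.toAddCommMonoid ℝ _ _ NormedSpace.toModule _, HasFDerivAt C (ContinuousLinearMap.apply ℝ ℝ (dC μ)) μ)
    (hCasimir : ∀ (ν : @ContinuousLinearMap ℝ ℝ _ _ (RingHom.id ℝ) G _ NormedAddCommGroup.toAddCommGroup.toAddCommMonoid ℝ _ _ NormedSpace.toModule _) (η : G), ν ⁅dC ν, η⁆ = 0)
    (μ : ℝ → @ContinuousLinearMap ℝ ℝ _ _ (RingHom.id ℝ) G _ NormedAddCommGroup.toAddCommGroup.toAddCommMonoid ℝ _ _ NormedSpace.toModule _) (μ' : ℝ → @ContinuousLinearMap ℝ ℝ _ _ (RingHom.id ℝ) G _ NormedAddCommGroup.toAddCommGroup.toAddCommMonoid ℝ _ _ NormedSpace.toModule _)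
    (hμ : ∀ t : ℝ, HasDerivAt μ (μ' t) t)
    (heq : ∀ (t : ℝ) (η : G),
      μ' t η + μ t ⁅dh (μ t), η⁆ =
        -(θ * γ (μ t) ⁅dC (μ t), dh (μ t)⁆ ⁅dC (μ t), η⁆)) :
    ∀ s t : ℝ, C (μ s) = C (μ t) :=
  statement4_general θ γ C dh dC hdC hCasimir μ μ' hμ heq
end

section
/- Let Π, Γ, χ ∈ ℝ³, let 𝕀 be a symmetric positive-definite real 3×3 matrix, set Ω := 𝕀⁻¹Π, and let α ∈ ℝ (the weight mg). Assume Π·Γ ≠ 0. For the heavy top Hamiltonian h(Π, Γ) = ½ Π·𝕀⁻¹Π + α χ·Γ (so δh/δΠ = Ω and δh/δΓ = αχ) and the Casimir C(Π, Γ) = (Π·Γ)² (so δC/δΠ = 2(Π·Γ)Γ and δC/δΓ = 2(Π·Γ)Π), the selective-decay asymptotic conditions (δh/δΠ) × (δC/δΠ) = 0 and (δh/δΓ) × (δC/δΠ) − (δC/δΓ) × (δh/δΠ) = 0, i.e. Ω × (2(Π·Γ)Γ) = 0 and (αχ) × (2(Π·Γ)Γ) − (2(Π·Γ)Π) × Ω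 = 0, hold if and only if (Π, Γ) is an equilibrium of the heavy top equations, i.e. Π × Ω + α (Γ × χ) = 0 and Γ × Ω = 0. -/
/-! With `c = 2(Π·Γ) ≠ 0`, both selective-decay conditions are `c` times an equilibrium condition:
`Ω × cΓ = -c (Γ × Ω)` and `αχ × cΓ - cΠ × Ω = -c (Π × Ω + α Γ × χ)`, so over a domain they can be
divided by `c`. -/

open Matrix

section CrossProduct

variable {R : Type*} [CommRing R]

theorem cross_eq_zero_comm (u v : Fin 3 → R) : u ⨯₃ v = 0 ↔ v ⨯₃ u = 0 := by
  rw [← cross_anticomm, neg_eq_zero]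

theorem smul_cross_smul_sub_smul_cross (α c : R) (χ Γ P Ω : Fin 3 → R) :
    (α • χ) ⨯₃ (c • Γ) - (c • P) ⨯₃ Ω = -c • (P ⨯₃ Ω + α • (Γ ⨯₃ χ)) := by
  simp only [map_smul, LinearMap.smul_apply, ← cross_anticomm Γ χ]
  module

theorem heavyTop_selectiveDecay_iff_equilibrium [IsDomain R] {c : R} (hc : c ≠ 0) (α : R)
    (P Γ χ Ω : Fin 3 → R) :
    (Ω ⨯₃ (c • Γ) = 0 ∧ (α • χ) ⨯₃ (c • Γ) - (c • P) ⨯₃ Ω = 0) ↔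
      (P ⨯₃ Ω + α • (Γ ⨯₃ χ) = 0 ∧ Γ ⨯₃ Ω = 0) := by
  rw [and_comm, smul_cross_smul_sub_smul_cross, map_smul, smul_eq_zero, smul_eq_zero,
    neg_eq_zero, cross_eq_zero_comm Ω Γ]
  simp only [hc, false_or]

end CrossProduct

theorem statement9_general
    (P Γ χ : Fin 3 → ℝ) (α : ℝ)
    (Ω : Fin 3 → ℝ)
    (hne : P ⬝ᵥ Γ ≠ 0) :
    (Ω ⨯₃ ((2 * (P ⬝ᵥ Γ)) • Γ) = 0 ∧
        (α • χ) ⨯₃ ((2 * (P ⬝ᵥ Γ)) • Γ) - ((2 * (P ⬝ᵥ Γ)) • P) ⨯₃ Ω = 0) ↔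
      (P ⨯₃ Ω + α • (Γ ⨯₃ χ) = 0 ∧ Γ ⨯₃ Ω = 0) :=
  heavyTop_selectiveDecay_iff_equilibrium (mul_ne_zero two_ne_zero hne) α P Γ χ Ω

/-- Heavy top: with Hamiltonian `h(Π, Γ) = ½ Π·𝕀⁻¹Π + α χ·Γ` and Casimir
`C(Π, Γ) = (Π·Γ)²`, assuming `Π·Γ ≠ 0`, the selective-decay asymptotic conditions
`Ω × (2(Π·Γ)Γ) = 0` and `(αχ) × (2(Π·Γ)Γ) − (2(Π·Γ)Π) × Ω = 0` hold iff `(Π, Γ)` is an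
equilibrium of the heavy top equations: `Π × Ω + α (Γ × χ) = 0` and `Γ × Ω = 0`. -/
theorem statement9
    (P Γ χ : Fin 3 → ℝ) (I : Matrix (Fin 3) (Fin 3) ℝ)
    (hI : I.PosDef) (α : ℝ)
    (Ω : Fin 3 → ℝ) (hΩ : Ω = I⁻¹.mulVec P)
    (hne : P ⬝ᵥ Γ ≠ 0) :
    (Ω ⨯₃ ((2 * (P ⬝ᵥ Γ)) • Γ) = 0 ∧
        (α • χ) ⨯₃ ((2 * (P ⬝ᵥ Γ)) • Γ) - ((2 * (P ⬝ᵥ Γ)) • P) ⨯₃ Ω = 0) ↔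
      (P ⨯₃ Ω + α • (Γ ⨯₃ χ) = 0 ∧ Γ ⨯₃ Ω = 0) :=
  statement9_general P Γ χ α Ω hne
end

section
/- Let Π : ℝ → ℝ³ be a differentiable curve, 𝕀 a symmetric positive-definite real 3×3 matrix, Ω(t) := 𝕀⁻¹Π(t), and θ ∈ ℝ. Suppose Π satisfies the Casimir-dissipative rigid body equation Π'(t) = Π(t) × Ω(t) + θ (Π(t) × Ω(t)) × Ω(t) for all t. Then for all t, the Casimir ½|Π|² decays at the rate (d/dt)(½ Π(t)·Π(t)) = − θ |Ω(t) × Π(t)|². -/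
/-!
Differentiating, `d/dt (½ Π·Π) = Π·Π'`. The conservative part `Π·(Π × Ω)` vanishes, and by the
cyclic symmetry of the triple product the dissipative part is
`θ Π·((Π × Ω) × Ω) = θ (Π × Ω)·(Ω × Π) = -θ |Ω × Π|²`.
-/

open Matrix

theorem HasDerivAt.dotProduct {𝕜 ι : Type*} [NontriviallyNormedField 𝕜] [Fintype ι]
    {f g : 𝕜 → ι → 𝕜} {f' g' : ι → 𝕜} {t : 𝕜}
    (hf : HasDerivAt f f' t) (hg : HasDerivAt g g' t) :
    HasDerivAt (fun s => f s ⬝ᵥ g s) (f' ⬝ᵥ g t + f t ⬝ᵥ g') t := by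
  refine (HasDerivAt.fun_sum (u := Finset.univ) (A := fun i s => f s i * g s i)
    fun i _ => (hasDerivAt_pi.mp hf i).mul (hasDerivAt_pi.mp hg i)).congr_deriv ?_
  rw [Finset.sum_add_distrib]; rfl

theorem dot_cross_cross_self {R : Type*} [CommRing R] (u w : Fin 3 → R) :
    u ⬝ᵥ (u ⨯₃ w) ⨯₃ w = -((w ⨯₃ u) ⬝ᵥ (w ⨯₃ u)) := by
  rw [triple_product_permutation, ← cross_anticomm w u, neg_dotProduct]

theorem statement10_general
    (θ : ℝ)
    (P : ℝ → Fin 3 → ℝ) (Ω : ℝ → Fin 3 → ℝ)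
    (hP : ∀ t : ℝ,
      HasDerivAt P ((P t ⨯₃ Ω t) + θ • ((P t ⨯₃ Ω t) ⨯₃ Ω t)) t) :
    ∀ t : ℝ,
      HasDerivAt (fun s => (1 / 2) * (P s ⬝ᵥ P s))
        (-(θ * ((Ω t ⨯₃ P t) ⬝ᵥ (Ω t ⨯₃ P t)))) t := by
  intro t
  refine (((hP t).dotProduct (hP t)).const_mul (1 / 2 : ℝ)).congr_deriv ?_
  rw [dotProduct_comm _ (P t), dotProduct_add, dotProduct_smul, dot_self_cross,
    dot_cross_cross_self, smul_eq_mul]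
  ring

/-- A solution `Π` of the Casimir-dissipative rigid body equation
`Π' = Π × Ω + θ (Π × Ω) × Ω`, with `Ω = 𝕀⁻¹Π`, dissipates the Casimir `½|Π|²` at the rate
`d/dt (½ Π·Π) = − θ |Ω × Π|²`. -/
theorem statement10
    (I : Matrix (Fin 3) (Fin 3) ℝ) (hI : I.PosDef) (θ : ℝ)
    (P : ℝ → Fin 3 → ℝ) (Ω : ℝ → Fin 3 → ℝ)
    (hΩ : ∀ t : ℝ, Ω t = I⁻¹.mulVec (P t))
    (hP : ∀ t : ℝ,
      HasDerivAt P ((P t ⨯₃ Ω t) + θ • ((P t ⨯₃ Ω t) ⨯₃ Ω t)) t) :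
    ∀ t : ℝ,
      HasDerivAt (fun s => (1 / 2) * (P s ⬝ᵥ P s))
        (-(θ * ((Ω t ⨯₃ P t) ⬝ᵥ (Ω t ⨯₃ P t)))) t :=
  statement10_general θ P Ω hP
end

section
/- Let ψ, A : ℝ³ → ℝ be smooth (C^∞) functions of (t, x, y), 1-periodic in x and in y, let θ ∈ ℝ, and set ω := −Δψ, J := −ΔA, and Ã := A + θ{ψ, A}. Suppose the modified 2D incompressible MHD equations (magnetic field in the plane, Grad–Shafranov Casimir C = ½∫A², K = Id) hold at every point: ∂_t ω + {ω, ψ} + {Ã, J} = 0 and ∂_t A + {Ã, ψ} = 0. Then for every t ∈ ℝ, the function t ↦ ½ ∫_{[0,1]²} A(t, x, y)² dx dy is differentiable with derivative − θ ∫_{[0,1]²} {ψ, A}(t, x, y)² dx dy. -/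
open MeasureTheory

/-- Partial derivative in the time variable `t` of a function of `(t, x, y)`. -/
noncomputable def pdt (f : ℝ × ℝ × ℝ → ℝ) (p : ℝ × ℝ × ℝ) : ℝ :=
  deriv (fun s => f (s, p.2.1, p.2.2)) p.1

/-- Partial derivative in the first spatial variable `x`. -/
noncomputable def pdx (f : ℝ × ℝ × ℝ → ℝ) (p : ℝ × ℝ × ℝ) : ℝ :=
  deriv (fun s => f (p.1, s, p.2.2)) p.2.1

/-- Partial derivative in the second spatial variable `y`. -/
noncomputable def pdy (f : ℝ × ℝ × ℝ → ℝ) (p : ℝ × ℝ × ℝ) : ℝ :=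
  deriv (fun s => f (p.1, p.2.1, s)) p.2.2

/-- The canonical (Jacobian) bracket `{f, g} = ∂ₓf ∂_y g − ∂_y f ∂ₓ g` in the spatial
variables. -/
noncomputable def jacBracket (f g : ℝ × ℝ × ℝ → ℝ) (p : ℝ × ℝ × ℝ) : ℝ :=
  pdx f p * pdy g p - pdy f p * pdx g p

/-- The spatial Laplacian `Δ = ∂ₓ² + ∂_y²`. -/
noncomputable def spatialLap (f : ℝ × ℝ × ℝ → ℝ) (p : ℝ × ℝ × ℝ) : ℝ :=
  pdx (pdx f) p + pdy (pdy f) p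

/-!
Multiplying the induction equation `∂ₜA = −{Ã, ψ}` by `2A` and using the Leibniz rule and
antisymmetry of the bracket, with `B = {ψ, A}`:
`∂ₜ(A²) = −2A{A, ψ} − 2θA{B, ψ} = −{A² + 2θAB, ψ} − 2θB²`,
since `A{B, ψ} = {AB, ψ} − B{A, ψ} = {AB, ψ} + B²`.
By Clairaut, every bracket `{G, ψ} = ∂ₓ(G ∂_yψ) − ∂_y(G ∂ₓψ)` is a divergence, so its integral
over a period cell vanishes, leaving `d/dt ∫A² = −2θ ∫B²`.
-/

open Set Function

section PartialDerivatives

variable {f g : ℝ × ℝ × ℝ → ℝ} {p : ℝ × ℝ × ℝ}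

theorem hasDerivAt_pdt (hf : DifferentiableAt ℝ f p) :
    HasDerivAt (fun s => f (s, p.2.1, p.2.2)) (pdt f p) p.1 :=
  (hf.comp p.1 (by fun_prop)).hasDerivAt

theorem hasDerivAt_pdx (hf : DifferentiableAt ℝ f p) :
    HasDerivAt (fun s => f (p.1, s, p.2.2)) (pdx f p) p.2.1 :=
  (hf.comp p.2.1 (by fun_prop)).hasDerivAt

theorem hasDerivAt_pdy (hf : DifferentiableAt ℝ f p) :
    HasDerivAt (fun s => f (p.1, p.2.1, s)) (pdy f p) p.2.2 :=
  (hf.comp p.2.2 (by fun_prop)).hasDerivAt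

theorem pdt_eq_fderiv (hf : Differentiable ℝ f) : pdt f = fun q => fderiv ℝ f q (1, 0, 0) :=
  funext fun p => ((hf p).hasFDerivAt.comp_hasDerivAt p.1
    ((hasDerivAt_id _).prodMk ((hasDerivAt_const _ _).prodMk (hasDerivAt_const _ _)))).deriv

theorem pdx_eq_fderiv (hf : Differentiable ℝ f) : pdx f = fun q => fderiv ℝ f q (0, 1, 0) :=
  funext fun p => ((hf p).hasFDerivAt.comp_hasDerivAt p.2.1
    ((hasDerivAt_const _ _).prodMk ((hasDerivAt_id _).prodMk (hasDerivAt_const _ _)))).deriv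

theorem pdy_eq_fderiv (hf : Differentiable ℝ f) : pdy f = fun q => fderiv ℝ f q (0, 0, 1) :=
  funext fun p => ((hf p).hasFDerivAt.comp_hasDerivAt p.2.2
    ((hasDerivAt_const _ _).prodMk ((hasDerivAt_const _ _).prodMk (hasDerivAt_id _)))).deriv

theorem pdx_add (hf : DifferentiableAt ℝ f p) (hg : DifferentiableAt ℝ g p) :
    pdx (fun q => f q + g q) p = pdx f p + pdx g p :=
  ((hasDerivAt_pdx hf).add (hasDerivAt_pdx hg)).deriv

theorem pdy_add (hf : DifferentiableAt ℝ f p) (hg : DifferentiableAt ℝ g p) :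
    pdy (fun q => f q + g q) p = pdy f p + pdy g p :=
  ((hasDerivAt_pdy hf).add (hasDerivAt_pdy hg)).deriv

theorem pdx_mul (hf : DifferentiableAt ℝ f p) (hg : DifferentiableAt ℝ g p) :
    pdx (fun q => f q * g q) p = pdx f p * g p + f p * pdx g p :=
  ((hasDerivAt_pdx hf).mul (hasDerivAt_pdx hg)).deriv

theorem pdy_mul (hf : DifferentiableAt ℝ f p) (hg : DifferentiableAt ℝ g p) :
    pdy (fun q => f q * g q) p = pdy f p * g p + f p * pdy g p :=
  ((hasDerivAt_pdy hf).mul (hasDerivAt_pdy hg)).deriv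

theorem pdx_const_mul (c : ℝ) (hf : DifferentiableAt ℝ f p) :
    pdx (fun q => c * f q) p = c * pdx f p :=
  ((hasDerivAt_pdx hf).const_mul c).deriv

theorem pdy_const_mul (c : ℝ) (hf : DifferentiableAt ℝ f p) :
    pdy (fun q => c * f q) p = c * pdy f p :=
  ((hasDerivAt_pdy hf).const_mul c).deriv

end PartialDerivatives

section Regularity

open scoped ContDiff

variable {f g : ℝ × ℝ × ℝ → ℝ} {m n : ℕ∞ω}

theorem ContDiff.differentiable_of_succ_le (hf : ContDiff ℝ n f) (hmn : m + 1 ≤ n) :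
    Differentiable ℝ f :=
  hf.differentiable (zero_lt_one.trans_le (le_add_self.trans hmn)).ne'

theorem ContDiff.pdt (hf : ContDiff ℝ n f) (hmn : m + 1 ≤ n) : ContDiff ℝ m (pdt f) := by
  rw [pdt_eq_fderiv (hf.differentiable_of_succ_le hmn)]
  exact (hf.fderiv_right hmn).clm_apply contDiff_const

theorem ContDiff.pdx (hf : ContDiff ℝ n f) (hmn : m + 1 ≤ n) : ContDiff ℝ m (pdx f) := by
  rw [pdx_eq_fderiv (hf.differentiable_of_succ_le hmn)]
  exact (hf.fderiv_right hmn).clm_apply contDiff_const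

theorem ContDiff.pdy (hf : ContDiff ℝ n f) (hmn : m + 1 ≤ n) : ContDiff ℝ m (pdy f) := by
  rw [pdy_eq_fderiv (hf.differentiable_of_succ_le hmn)]
  exact (hf.fderiv_right hmn).clm_apply contDiff_const

theorem ContDiff.jacBracket (hf : ContDiff ℝ n f) (hg : ContDiff ℝ n g) (hmn : m + 1 ≤ n) :
    ContDiff ℝ m (jacBracket f g) :=
  ((hf.pdx hmn).mul (hg.pdy hmn)).sub ((hf.pdy hmn).mul (hg.pdx hmn))

theorem pdx_pdy_comm (hf : ContDiff ℝ 2 f) (p : ℝ × ℝ × ℝ) :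
    pdx (pdy f) p = pdy (pdx f) p := by
  have hdf : Differentiable ℝ f := hf.differentiable two_ne_zero
  have hdf' : Differentiable ℝ (fderiv ℝ f) :=
    (hf.fderiv_right (m := 1) (by norm_num)).differentiable one_ne_zero
  have hsymm := hf.contDiffAt.isSymmSndFDerivAt (x := p) (by simp) (0, 1, 0) (0, 0, 1)
  rw [pdy_eq_fderiv hdf, pdx_eq_fderiv hdf,
    pdx_eq_fderiv (hdf'.clm_apply (differentiable_const _)),
    pdy_eq_fderiv (hdf'.clm_apply (differentiable_const _))]
  simpa [fderiv_clm_apply (hdf' p) (differentiableAt_const _)] using hsymm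

end Regularity

section Bracket

variable {f g h : ℝ × ℝ × ℝ → ℝ} {p : ℝ × ℝ × ℝ}

theorem jacBracket_skew (f g : ℝ × ℝ × ℝ → ℝ) (p : ℝ × ℝ × ℝ) :
    -jacBracket g f p = jacBracket f g p := by
  simp only [jacBracket]; ring

theorem jacBracket_add_left (hf : DifferentiableAt ℝ f p) (hg : DifferentiableAt ℝ g p) :
    jacBracket (fun q => f q + g q) h p = jacBracket f h p + jacBracket g h p := by
  simp only [jacBracket, pdx_add hf hg, pdy_add hf hg]; ring

theorem jacBracket_const_mul_left (c : ℝ) (hf : DifferentiableAt ℝ f p) :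
    jacBracket (fun q => c * f q) h p = c * jacBracket f h p := by
  simp only [jacBracket, pdx_const_mul c hf, pdy_const_mul c hf]; ring

theorem jacBracket_mul_left (hf : DifferentiableAt ℝ f p) (hg : DifferentiableAt ℝ g p) :
    jacBracket (fun q => f q * g q) h p = f p * jacBracket g h p + g p * jacBracket f h p := by
  simp only [jacBracket, pdx_mul hf hg, pdy_mul hf hg]; ring

theorem jacBracket_eq_pdx_sub_pdy (hf : Differentiable ℝ f) (hg : ContDiff ℝ 2 g)
    (p : ℝ × ℝ × ℝ) :
    jacBracket f g p = pdx (fun q => f q * pdy g q) p - pdy (fun q => f q * pdx g q) p := by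
  have hgx : ContDiff ℝ 1 (pdx g) := hg.pdx (by norm_num)
  have hgy : ContDiff ℝ 1 (pdy g) := hg.pdy (by norm_num)
  rw [pdx_mul (hf p) (hgy.differentiable one_ne_zero p),
    pdy_mul (hf p) (hgx.differentiable one_ne_zero p), pdx_pdy_comm hg p, jacBracket]
  ring

end Bracket

section Periodicity

variable {f g : ℝ × ℝ × ℝ → ℝ} {v : ℝ × ℝ × ℝ}

theorem Function.Periodic.pdx (hf : Periodic f v) : Periodic (pdx f) v := fun p => by
  have hslice :
      (fun s => f (p.1, s, p.2.2)) = fun s => f ((p + v).1, s + v.2.1, (p + v).2.2) :=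
    funext fun s => (hf (p.1, s, p.2.2)).symm
  rw [_root_.pdx, _root_.pdx, hslice]
  exact (deriv_comp_add_const (fun s => f ((p + v).1, s, (p + v).2.2)) v.2.1 p.2.1).symm

theorem Function.Periodic.pdy (hf : Periodic f v) : Periodic (pdy f) v := fun p => by
  have hslice :
      (fun s => f (p.1, p.2.1, s)) = fun s => f ((p + v).1, (p + v).2.1, s + v.2.2) :=
    funext fun s => (hf (p.1, p.2.1, s)).symm
  rw [_root_.pdy, _root_.pdy, hslice]
  exact (deriv_comp_add_const (fun s => f ((p + v).1, (p + v).2.1, s)) v.2.2 p.2.2).symm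

theorem Function.Periodic.jacBracket (hf : Periodic f v) (hg : Periodic g v) :
    Periodic (jacBracket f g) v := fun p => by
  simp only [_root_.jacBracket, hf.pdx p, hf.pdy p, hg.pdx p, hg.pdy p]

end Periodicity

section Integrals

variable {f g : ℝ × ℝ × ℝ → ℝ} {K : Set (ℝ × ℝ)} {a b : ℝ}

theorem Function.Periodic.setIntegral_Icc_deriv_eq_zero {g : ℝ → ℝ} {c : ℝ}
    (hg : ContDiff ℝ 1 g) (hper : Periodic g c) (hc : 0 ≤ c) :
    ∫ x in Icc 0 c, deriv g x = 0 := by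
  rw [integral_Icc_eq_integral_Ioc, ← intervalIntegral.integral_of_le hc,
    intervalIntegral.integral_deriv_eq_sub (fun x _ => hg.differentiable one_ne_zero x)
      ((hg.continuous_deriv le_rfl).intervalIntegrable _ _)]
  simpa [sub_eq_zero] using hper 0

theorem Continuous.integrableOn_slice (hf : Continuous f) (hK : IsCompact K) (t : ℝ) :
    IntegrableOn (fun q : ℝ × ℝ => f (t, q.1, q.2)) K :=
  (show Continuous fun q : ℝ × ℝ => f (t, q.1, q.2) by fun_prop).continuousOn.integrableOn_compact
    hK

theorem setIntegral_Icc_prod_pdx_eq_zero (hf : ContDiff ℝ 1 f) (hper : Periodic f (0, a, 0))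
    (ha : 0 ≤ a) (b t : ℝ) : ∫ q in Icc 0 a ×ˢ Icc 0 b, pdx f (t, q.1, q.2) = 0 := by
  have hslice (y : ℝ) : ∫ x in Icc 0 a, pdx f (t, x, y) = 0 :=
    Periodic.setIntegral_Icc_deriv_eq_zero (g := fun s => f (t, s, y)) (hf.comp (by fun_prop))
      (fun x => by simpa using hper (t, x, y)) ha
  rw [Measure.volume_eq_prod, ← Measure.prod_restrict, integral_prod_symm]
  · simp [hslice]
  · rw [Measure.prod_restrict]
    exact (hf.pdx (m := 0) (by norm_num)).continuous.integrableOn_slice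
      (isCompact_Icc.prod isCompact_Icc) t

theorem setIntegral_Icc_prod_pdy_eq_zero (hf : ContDiff ℝ 1 f) (hper : Periodic f (0, 0, b))
    (hb : 0 ≤ b) (a t : ℝ) : ∫ q in Icc 0 a ×ˢ Icc 0 b, pdy f (t, q.1, q.2) = 0 := by
  have hslice (x : ℝ) : ∫ y in Icc 0 b, pdy f (t, x, y) = 0 :=
    Periodic.setIntegral_Icc_deriv_eq_zero (g := fun s => f (t, x, s)) (hf.comp (by fun_prop))
      (fun y => by simpa using hper (t, x, y)) hb
  rw [Measure.volume_eq_prod, setIntegral_prod]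
  · simp [hslice]
  · exact (hf.pdy (m := 0) (by norm_num)).continuous.integrableOn_slice
      (isCompact_Icc.prod isCompact_Icc) t


theorem setIntegral_Icc_prod_jacBracket_eq_zero (hf : ContDiff ℝ 1 f) (hg : ContDiff ℝ 2 g)
    (hfx : Periodic f (0, a, 0)) (hfy : Periodic f (0, 0, b))
    (hgx : Periodic g (0, a, 0)) (hgy : Periodic g (0, 0, b)) (ha : 0 ≤ a) (hb : 0 ≤ b)
    (t : ℝ) : ∫ q in Icc 0 a ×ˢ Icc 0 b, jacBracket f g (t, q.1, q.2) = 0 := by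
  have hfpdy : ContDiff ℝ 1 fun q => f q * pdy g q := hf.mul (hg.pdy (by norm_num))
  have hfpdx : ContDiff ℝ 1 fun q => f q * pdx g q := hf.mul (hg.pdx (by norm_num))
  have hK : IsCompact (Icc 0 a ×ˢ Icc 0 b) := isCompact_Icc.prod isCompact_Icc
  simp only [jacBracket_eq_pdx_sub_pdy (hf.differentiable one_ne_zero) hg]
  rw [integral_sub ((hfpdy.pdx (m := 0) (by norm_num)).continuous.integrableOn_slice hK t)
      ((hfpdx.pdy (m := 0) (by norm_num)).continuous.integrableOn_slice hK t),
    setIntegral_Icc_prod_pdx_eq_zero hfpdy (hfx.mul hgx.pdy) ha,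
    setIntegral_Icc_prod_pdy_eq_zero hfpdx (hfy.mul hgy.pdx) hb, sub_zero]

theorem hasDerivAt_setIntegral_slice (hf : ContDiff ℝ 1 f) (hK : IsCompact K) (t : ℝ) :
    HasDerivAt (fun s => ∫ q in K, f (s, q.1, q.2)) (∫ q in K, pdt f (t, q.1, q.2)) t := by
  have hpdt : Continuous (pdt f) := (hf.pdt (m := 0) (by norm_num)).continuous
  obtain ⟨C, hC⟩ :=
    ((isCompact_Icc (a := t - 1) (b := t + 1)).prod hK).exists_bound_of_continuousOn
      hpdt.continuousOn
  refine (hasDerivAt_integral_of_dominated_loc_of_deriv_le (bound := fun _ => C)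
    (F' := fun s q => pdt f (s, q.1, q.2)) (Metric.ball_mem_nhds t one_pos)
    (.of_forall fun s => (hf.continuous.integrableOn_slice hK s).aestronglyMeasurable)
    (hf.continuous.integrableOn_slice hK t) (hpdt.integrableOn_slice hK t).aestronglyMeasurable ?_
    (integrableOn_const hK.measure_lt_top.ne) ?_).2
  · filter_upwards [ae_restrict_mem hK.measurableSet] with q hq s hs
    rw [Real.ball_eq_Ioo] at hs
    exact hC (s, q) ⟨Ioo_subset_Icc_self hs, hq⟩
  · exact .of_forall fun q s _ =>
      hasDerivAt_pdt (p := (s, q.1, q.2)) (hf.differentiable one_ne_zero _)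

end Integrals

theorem pdt_sq_eq_of_pdt_add_jacBracket_eq_zero {A ψ : ℝ × ℝ × ℝ → ℝ} {θ : ℝ}
    {p : ℝ × ℝ × ℝ}
    (hA : DifferentiableAt ℝ A p) (hB : DifferentiableAt ℝ (jacBracket ψ A) p)
    (hind : pdt A p + jacBracket (fun q => A q + θ * jacBracket ψ A q) ψ p = 0) :
    pdt (fun q => A q ^ 2) p =
      -(jacBracket (fun q => A q * A q + 2 * θ * (A q * jacBracket ψ A q)) ψ p
        + 2 * θ * jacBracket ψ A p ^ 2) := by
  have hAB := hA.fun_mul hB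
  have hpdt_sq : pdt (fun q => A q ^ 2) p = 2 * A p * pdt A p :=
    ((hasDerivAt_pdt hA).fun_pow 2).deriv.trans (by simp)
  rw [hpdt_sq, eq_neg_of_add_eq_zero_left hind, jacBracket_add_left hA (hB.const_mul θ),
    jacBracket_const_mul_left θ hB, jacBracket_add_left (hA.fun_mul hA) (hAB.const_mul _),
    jacBracket_const_mul_left _ hAB, jacBracket_mul_left hA hA, jacBracket_mul_left hA hB,
    ← jacBracket_skew ψ A]
  ring

theorem setIntegral_pdt_sq_eq {A ψ : ℝ × ℝ × ℝ → ℝ} {θ a b : ℝ} (hA : ContDiff ℝ 2 A)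
    (hψ : ContDiff ℝ 2 ψ) (hAx : Periodic A (0, a, 0)) (hAy : Periodic A (0, 0, b))
    (hψx : Periodic ψ (0, a, 0)) (hψy : Periodic ψ (0, 0, b)) (ha : 0 ≤ a) (hb : 0 ≤ b)
    (hind : ∀ p, pdt A p + jacBracket (fun q => A q + θ * jacBracket ψ A q) ψ p = 0) (t : ℝ) :
    ∫ q in Icc 0 a ×ˢ Icc 0 b, pdt (fun q => A q ^ 2) (t, q.1, q.2) =
      -(2 * θ * ∫ q in Icc 0 a ×ˢ Icc 0 b, jacBracket ψ A (t, q.1, q.2) ^ 2) := by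
  have hA1 : ContDiff ℝ 1 A := hA.of_le one_le_two
  have hψ1 : ContDiff ℝ 1 ψ := hψ.of_le one_le_two
  have hB : ContDiff ℝ 1 (jacBracket ψ A) := hψ.jacBracket hA (by norm_num)
  have hG : ContDiff ℝ 1 fun q => A q * A q + 2 * θ * (A q * jacBracket ψ A q) := by fun_prop
  have hG_periodic {v : ℝ × ℝ × ℝ} (hAv : Periodic A v) (hψv : Periodic ψ v) :
      Periodic (fun q => A q * A q + 2 * θ * (A q * jacBracket ψ A q)) v := fun p => by
    simp only [hAv p, hψv.jacBracket hAv p]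
  have hK : IsCompact (Icc 0 a ×ˢ Icc 0 b) := isCompact_Icc.prod isCompact_Icc
  have hGψ : Continuous (jacBracket (fun q => A q * A q + 2 * θ * (A q * jacBracket ψ A q)) ψ) :=
    (hG.jacBracket hψ1 (m := 0) (by norm_num)).continuous
  have hB2 : Continuous fun p => 2 * θ * jacBracket ψ A p ^ 2 := by fun_prop
  simp only [fun p => pdt_sq_eq_of_pdt_add_jacBracket_eq_zero (hA1.differentiable one_ne_zero p)
    (hB.differentiable one_ne_zero p) (hind p)]
  rw [integral_neg, integral_add (hGψ.integrableOn_slice hK t) (hB2.integrableOn_slice hK t),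
    setIntegral_Icc_prod_jacBracket_eq_zero hG hψ (hG_periodic hAx hψx) (hG_periodic hAy hψy)
      hψx hψy ha hb t,
    integral_const_mul, zero_add]

theorem statement15_general
    (ψ A : ℝ × ℝ × ℝ → ℝ) (θ : ℝ)
    (hψ : ContDiff ℝ (⊤ : ℕ∞) ψ) (hA : ContDiff ℝ (⊤ : ℕ∞) A)
    (hψx : ∀ t x y : ℝ, ψ (t, x + 1, y) = ψ (t, x, y))
    (hψy : ∀ t x y : ℝ, ψ (t, x, y + 1) = ψ (t, x, y))
    (hAx : ∀ t x y : ℝ, A (t, x + 1, y) = A (t, x, y))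
    (hAy : ∀ t x y : ℝ, A (t, x, y + 1) = A (t, x, y))
    (Atil : ℝ × ℝ × ℝ → ℝ)
    (hAtil : Atil = fun p => A p + θ * jacBracket ψ A p)
    (heq2 : ∀ p : ℝ × ℝ × ℝ, pdt A p + jacBracket Atil ψ p = 0) :
    ∀ t : ℝ,
      HasDerivAt
        (fun s => (1 / 2) *
          ∫ q in Set.Icc (0 : ℝ) 1 ×ˢ Set.Icc (0 : ℝ) 1, (A (s, q.1, q.2)) ^ 2)
        (-(θ * ∫ q in Set.Icc (0 : ℝ) 1 ×ˢ Set.Icc (0 : ℝ) 1,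
            (jacBracket ψ A (t, q.1, q.2)) ^ 2)) t := by
  intro t
  subst hAtil
  have hψ2 : ContDiff ℝ 2 ψ := hψ.of_le (WithTop.coe_le_coe.mpr le_top)
  have hA2 : ContDiff ℝ 2 A := hA.of_le (WithTop.coe_le_coe.mpr le_top)
  have periodic_x {f : ℝ × ℝ × ℝ → ℝ} (h : ∀ t x y : ℝ, f (t, x + 1, y) = f (t, x, y)) :
      Periodic f (0, 1, 0) := fun ⟨t, x, y⟩ => by simpa using h t x y
  have periodic_y {f : ℝ × ℝ × ℝ → ℝ} (h : ∀ t x y : ℝ, f (t, x, y + 1) = f (t, x, y)) :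
      Periodic f (0, 0, 1) := fun ⟨t, x, y⟩ => by simpa using h t x y
  have hdensity := setIntegral_pdt_sq_eq hA2 hψ2 (periodic_x hAx) (periodic_y hAy)
    (periodic_x hψx) (periodic_y hψy) zero_le_one zero_le_one heq2 t
  refine ((hasDerivAt_setIntegral_slice ((hA2.of_le one_le_two).pow 2)
    (isCompact_Icc.prod isCompact_Icc) t).const_mul (1 / 2 : ℝ)).congr_deriv ?_
  rw [hdensity]
  ring

/-- For smooth, spatially `1`-periodic solutions of the modified 2D
incompressible MHD equations with `𝐁` in the plane and Grad–Shafranov Casimir `½∫A²`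
(K = Id): `∂ₜω + {ω, ψ} + {Ã, J} = 0`, `∂ₜA + {Ã, ψ} = 0`, where `ω = −Δψ`, `J = −ΔA`,
`Ã = A + θ{ψ, A}`, the Casimir decays at the rate
`d/dt (½∫A²) = −θ ∫ {ψ, A}²` (integrals over the unit square). -/
theorem statement15
    (ψ A : ℝ × ℝ × ℝ → ℝ) (θ : ℝ)
    (hψ : ContDiff ℝ (⊤ : ℕ∞) ψ) (hA : ContDiff ℝ (⊤ : ℕ∞) A)
    (hψx : ∀ t x y : ℝ, ψ (t, x + 1, y) = ψ (t, x, y))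
    (hψy : ∀ t x y : ℝ, ψ (t, x, y + 1) = ψ (t, x, y))
    (hAx : ∀ t x y : ℝ, A (t, x + 1, y) = A (t, x, y))
    (hAy : ∀ t x y : ℝ, A (t, x, y + 1) = A (t, x, y))
    (ω J Atil : ℝ × ℝ × ℝ → ℝ)
    (hω : ω = fun p => -spatialLap ψ p)
    (hJ : J = fun p => -spatialLap A p)
    (hAtil : Atil = fun p => A p + θ * jacBracket ψ A p)
    (heq1 : ∀ p : ℝ × ℝ × ℝ, pdt ω p + jacBracket ω ψ p + jacBracket Atil J p = 0)
    (heq2 : ∀ p : ℝ × ℝ × ℝ, pdt A p + jacBracket Atil ψ p = 0) :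
    ∀ t : ℝ,
      HasDerivAt
        (fun s => (1 / 2) *
          ∫ q in Set.Icc (0 : ℝ) 1 ×ˢ Set.Icc (0 : ℝ) 1, (A (s, q.1, q.2)) ^ 2)
        (-(θ * ∫ q in Set.Icc (0 : ℝ) 1 ×ˢ Set.Icc (0 : ℝ) 1,
            (jacBracket ψ A (t, q.1, q.2)) ^ 2)) t :=
  statement15_general ψ A θ hψ hA hψx hψy hAx hAy Atil hAtil heq2
end
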